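/- Let Γ be a generalized recursive atom ordering of a finite bounded poset P. Define a labeling λ with labels in ℕ as follows: for a maximal chain m of P containing a cover relation u ⋖ a, let r be the portion of m from 0̂ to u, and set λ(m,u,a) = i, where a is the i-th atom of [u,1̂]_r in the Γ-order. Then λ is a well-defined CE-labeling of P, λ is a CC-labeling of P, and λ has the unique earliest (UE) property (hence λ is self-consistent). -/

import Mathlib

/-- `l` is a saturated chain from `x` to `y` in the poset `α`:
a list `x = x₀ ⋖ x₁ ⋖ ⋯ ⋖ x_k = y` of elements, each covered by the next. -/
def SatChain {α : Type*} [PartialOrder α] (x y : α) (l : List α) : Prop :=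
  l.Chain' (· ⋖ ·) ∧ l.head? = some x ∧ l.getLast? = some y

/-- A chain-atom ordering of a bounded poset `α`: for each `u : α` and each root `r`
(a saturated chain from `⊥` to `u`, recorded as a list ending in `u`), a strict linear
order on the atoms of the rooted interval `[u, ⊤]_r`, i.e. on the elements covering `u`.
The relation is recorded for all pairs `(u, r)`; only genuine roots are relevant. -/
structure ChainAtomOrdering (α : Type*) [PartialOrder α] where
  lt : α → List α → α → α → Prop
  irrefl : ∀ u r a, ¬ lt u r a a
  trans : ∀ u r a b c, lt u r a b → lt u r b c → lt u r a c
  total : ∀ u r a b, u ⋖ a → u ⋖ b → a ≠ b → lt u r a b ∨ lt u r b a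

/-- `a` is the first atom of the rooted interval `[u,v]_r` in the chain-atom ordering `S`. -/
def ChainAtomOrdering.IsFirstAtom {α : Type*} [PartialOrder α] (S : ChainAtomOrdering α)
    (u v : α) (r : List α) (a : α) : Prop :=
  u ⋖ a ∧ a ≤ v ∧ ∀ b, u ⋖ b → b ≤ v → b ≠ a → S.lt u r a b

/-- `IsGRAO S u v r`: the restriction of the chain-atom ordering `S` to the rooted
interval `[u,v]_r` is a generalized recursive atom ordering (GRAO) of `[u,v]`.
Either `[u,v]` has length 1, or: (i)(a) for each atom `a` of `[u,v]_r` the restriction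
to `[a,v]_{r·a}` is a GRAO; (i)(b) for each atom `a` and each `a ⋖ x ⋖ w ≤ v`, either
the first atom of `[a,w]_{r·a}` lies above some atom of `[u,v]_r` earlier than `a`, or
no atom of `[a,w]_{r·a}` does; (ii) if atoms `ai, aj` of `[u,v]_r` with `ai` earlier
than `aj` lie below a common `y ≤ v`, then some `z` with `aj ⋖ z ≤ y` lies above an
atom of `[u,v]_r` earlier than `aj`. -/
inductive IsGRAO {α : Type*} [PartialOrder α] (S : ChainAtomOrdering α) :
    α → α → List α → Prop
  | base (u v : α) (r : List α) (h : u ⋖ v) : IsGRAO S u v r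
  | step (u v : α) (r : List α)
      (ia : ∀ a, u ⋖ a → a ≤ v → IsGRAO S a v (r ++ [a]))
      (ib : ∀ a x w, u ⋖ a → a ≤ v → a ⋖ x → x ⋖ w → w ≤ v →
        (∃ b, S.IsFirstAtom a w (r ++ [a]) b ∧
          ∃ a', u ⋖ a' ∧ a' ≤ v ∧ S.lt u r a' a ∧ a' < b) ∨
        (∀ b a', a ⋖ b → b ≤ w → u ⋖ a' → a' ≤ v → S.lt u r a' a → ¬ a' < b))
      (ii : ∀ ai aj y, u ⋖ ai → ai ≤ v → u ⋖ aj → aj ≤ v → S.lt u r ai aj →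
        ai < y → aj < y → y ≤ v →
        ∃ ak z, u ⋖ ak ∧ ak ≤ v ∧ S.lt u r ak aj ∧ aj ⋖ z ∧ z ≤ y ∧ ak < z) :
      IsGRAO S u v r

/-- `IsRAO S u v r`: the restriction of the chain-atom ordering `S` to the rooted
interval `[u,v]_r` is a recursive atom ordering (RAO) of `[u,v]`.  It differs from a
GRAO only in condition (i)(b): for each atom `a` of `[u,v]_r`, every atom of
`[a,v]_{r·a}` lying above some atom of `[u,v]_r` earlier than `a` must precede every
atom of `[a,v]_{r·a}` lying above no such atom. -/
inductive IsRAO {α : Type*} [PartialOrder α] (S : ChainAtomOrdering α) :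
    α → α → List α → Prop
  | base (u v : α) (r : List α) (h : u ⋖ v) : IsRAO S u v r
  | step (u v : α) (r : List α)
      (ia : ∀ a, u ⋖ a → a ≤ v → IsRAO S a v (r ++ [a]))
      (ib : ∀ a b c, u ⋖ a → a ≤ v → a ⋖ b → b ≤ v → a ⋖ c → c ≤ v →
        (∃ a', u ⋖ a' ∧ a' ≤ v ∧ S.lt u r a' a ∧ a' < b) →
        (∀ a', u ⋖ a' → a' ≤ v → S.lt u r a' a → ¬ a' < c) →
        S.lt a (r ++ [a]) b c)
      (ii : ∀ ai aj y, u ⋖ ai → ai ≤ v → u ⋖ aj → aj ≤ v → S.lt u r ai aj →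
        ai < y → aj < y → y ≤ v →
        ∃ ak z, u ⋖ ak ∧ ak ≤ v ∧ S.lt u r ak aj ∧ aj ⋖ z ∧ z ≤ y ∧ ak < z) :
      IsRAO S u v r

/-- The label sequence of a saturated chain, read from bottom to top.  Here
`lab r x y` is the label of the cover relation `x ⋖ y` with respect to the root `r`
(a saturated chain from `⊥` to `x` recorded as a list ending in `x`); this encodes a
chain-edge (CE-) labeling.  The first list argument is the root of the head of the
chain, the second is the chain itself. -/
def labelSeq {α Q : Type*} (lab : List α → α → α → Q) : List α → List α → List Q
  | _, [] => []
  | _, [_] => []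
  | r, x :: y :: c => lab r x y :: labelSeq lab (r ++ [y]) (y :: c)

/-- `u ⋖ v ⋖ w` is a topological ascent with respect to the root `r`: the label
sequence of `u ⋖ v ⋖ w` is lexicographically strictly smaller than that of every
other saturated chain from `u` to `w`. -/
def TopAscent {α Q : Type*} [PartialOrder α] [LinearOrder Q]
    (lab : List α → α → α → Q) (r : List α) (u v w : α) : Prop :=
  u ⋖ v ∧ v ⋖ w ∧ ∀ c, SatChain u w c → c ≠ [u, v, w] →
    List.Lex (· < ·) (labelSeq lab r [u, v, w]) (labelSeq lab r c)

/-- The saturated chain (second argument) is topologically ascending with respect to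
the root given as first argument: every consecutive triple on it is a topological
ascent (with respect to the appropriately extended root). -/
def TopAscending {α Q : Type*} [PartialOrder α] [LinearOrder Q]
    (lab : List α → α → α → Q) : List α → List α → Prop
  | r, u :: v :: w :: c => TopAscent lab r u v w ∧ TopAscending lab (r ++ [v]) (v :: w :: c)
  | _, _ => True

/-- `lab` is a CC-labeling: every rooted interval `[u,v]_r` has exactly one
topologically ascending saturated chain, distinct saturated chains of `[u,v]_r` have
distinct label sequences, and no label sequence is a prefix of another. -/
def IsCCLabeling {α Q : Type*} [PartialOrder α] [OrderBot α] [LinearOrder Q]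
    (lab : List α → α → α → Q) : Prop :=
  ∀ u v r, SatChain (⊥ : α) u r → u ≤ v →
    (∃! c, SatChain u v c ∧ TopAscending lab r c) ∧
    (∀ c c', SatChain u v c → SatChain u v c' → c ≠ c' →
      labelSeq lab r c ≠ labelSeq lab r c' ∧
      ¬ labelSeq lab r c <+: labelSeq lab r c')

/-- `lab` is a CL-labeling: every rooted interval `[u,v]_r` has exactly one saturated
chain with strictly increasing label sequence, and this label sequence is
lexicographically strictly smaller than that of every other saturated chain. -/
def IsCLLabeling {α Q : Type*} [PartialOrder α] [OrderBot α] [LinearOrder Q]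
    (lab : List α → α → α → Q) : Prop :=
  ∀ u v r, SatChain (⊥ : α) u r → u ≤ v →
    ∃ c, SatChain u v c ∧ List.Chain' (· < ·) (labelSeq lab r c) ∧
      (∀ c', SatChain u v c' → List.Chain' (· < ·) (labelSeq lab r c') → c' = c) ∧
      (∀ c', SatChain u v c' → c' ≠ c →
        List.Lex (· < ·) (labelSeq lab r c) (labelSeq lab r c'))

/-- `lab` is a topological CL-labeling: every rooted interval `[u,v]_r` has a unique
saturated chain with lexicographically smallest label sequence, and every other
saturated chain of `[u,v]_r` contains at least one topological descent (i.e. is not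
topologically ascending). -/
def IsTopolCLLabeling {α Q : Type*} [PartialOrder α] [OrderBot α] [LinearOrder Q]
    (lab : List α → α → α → Q) : Prop :=
  ∀ u v r, SatChain (⊥ : α) u r → u ≤ v →
    ∃ c, SatChain u v c ∧
      (∀ c', SatChain u v c' → c' ≠ c →
        List.Lex (· < ·) (labelSeq lab r c) (labelSeq lab r c')) ∧
      (∀ c', SatChain u v c' → c' ≠ c → ¬ TopAscending lab r c')

/-- `lab` has the unique earliest (UE) property: in each rooted interval `[u,v]_r`,
the smallest label on the cover relations upward from `u` occurs on only one such
cover relation. -/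
def HasUE {α Q : Type*} [PartialOrder α] [OrderBot α] [LinearOrder Q]
    (lab : List α → α → α → Q) : Prop :=
  ∀ u v r, SatChain (⊥ : α) u r → u ≤ v →
    ∀ a b, u ⋖ a → a ≤ v → u ⋖ b → b ≤ v →
      (∀ a', u ⋖ a' → a' ≤ v → lab r u a ≤ lab r u a') →
      (∀ a', u ⋖ a' → a' ≤ v → lab r u b ≤ lab r u a') → a = b

/-- `lab` is self-consistent: whenever `c₀` is the lexicographically strictly first
saturated chain of a rooted interval `[u,v]_r`, with `a` the atom on `c₀` and
`b ≠ a` another atom of `[u,v]_r`, then for every `v'` above both `a` and `b`, every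
saturated chain of `[u,v']_r` through `b` is lexicographically later than every
saturated chain of `[u,v']_r` through `a`. -/
def SelfConsistent {α Q : Type*} [PartialOrder α] [OrderBot α] [LinearOrder Q]
    (lab : List α → α → α → Q) : Prop :=
  ∀ u v r, SatChain (⊥ : α) u r → ∀ c₀, SatChain u v c₀ →
    (∀ c, SatChain u v c → c ≠ c₀ →
      List.Lex (· < ·) (labelSeq lab r c₀) (labelSeq lab r c)) →
    ∀ a, u ⋖ a → a ∈ c₀ →
    ∀ b, u ⋖ b → b ≤ v → b ≠ a →
    ∀ v', a ≤ v' → b ≤ v' →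
    ∀ ca cb, SatChain u v' ca → a ∈ ca → SatChain u v' cb → b ∈ cb →
      List.Lex (· < ·) (labelSeq lab r ca) (labelSeq lab r cb)


/-!
The label of `u ⋖ a` is strictly increasing in the `Γ`-order on the atoms of `[u, ⊤]_r`, so the
label sequences of two chains are compared at the first step where the chains diverge.  This
gives the prefix condition, the UE property and self-consistency (the lexicographically first
chain of `[u, v]_r` starts with the `Γ`-first atom), and it shows that `u ⋖ a ⋖ x` is a
topological ascent exactly when `a` is the `Γ`-first atom of `[u, x]_r`.  Hence the greedy chain,
which always steps to the `Γ`-first atom below `v`, is topologically ascending.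

Conversely, let `a` be first in `[u, x]_r` and `x` first in `[a, v]_{r·a}`.  If some atom `b ≤ v`
preceded `a`, then by (ii) some atom of `[a, v]` lies above an atom preceding `a`; the `Γ`-first
such atom must be `x`, since for any other one (ii) in `[a, v]` followed by (i)(b) produces an
earlier one.  So `x` lies above an atom preceding `a`, contradicting the choice of `a`.  Thus `a`
is first in `[u, v]_r`, and by induction along the chain the only topologically ascending chain
is the greedy one.
-/

section SatChain

variable {α : Type*} [PartialOrder α] {x y z a : α} {c : List α}

theorem satChain_iff :
    SatChain x y c ↔ c.IsChain (· ⋖ ·) ∧ c.head? = some x ∧ c.getLast? = some y :=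
  Iff.rfl

theorem satChain_singleton (x : α) : SatChain x x [x] :=
  ⟨List.isChain_singleton x, rfl, rfl⟩

theorem satChain_singleton_iff : SatChain x y [z] ↔ z = x ∧ z = y := by
  simp [satChain_iff, eq_comm]

theorem satChain_cons_cons_iff {w : α} {t : List α} :
    SatChain x y (w :: a :: t) ↔ w = x ∧ x ⋖ a ∧ SatChain a y (a :: t) := by
  simp only [satChain_iff, List.isChain_cons_cons, List.head?_cons, Option.some.injEq,
    List.getLast?_cons_cons, true_and]
  constructor
  · rintro ⟨⟨hwa, ht⟩, rfl, hy⟩; exact ⟨rfl, hwa, ht, hy⟩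
  · rintro ⟨rfl, hwa, ht, hy⟩; exact ⟨⟨hwa, ht⟩, rfl, hy⟩

theorem SatChain.exists_eq_cons (h : SatChain x y c) : ∃ t, c = x :: t := by
  rcases c with _ | ⟨w, t⟩
  · simp [SatChain] at h
  · exact ⟨t, by simpa [SatChain] using h.2.1⟩

theorem SatChain.cons (hxy : x ⋖ y) (h : SatChain y z c) : SatChain x z (x :: c) := by
  obtain ⟨t, rfl⟩ := h.exists_eq_cons
  exact satChain_cons_cons_iff.2 ⟨rfl, hxy, h⟩

@[elab_as_elim]
theorem SatChain.induction {motive : ∀ x c, SatChain x y c → Prop}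
    (singleton : motive y [y] (satChain_singleton y))
    (cons : ∀ x a t (hxa : x ⋖ a) (h : SatChain a y (a :: t)), motive a (a :: t) h →
      motive x (x :: a :: t) (h.cons hxa))
    (x : α) (c : List α) (h : SatChain x y c) : motive x c h := by
  induction c generalizing x with
  | nil => simp [SatChain] at h
  | cons w t ih =>
    obtain rfl : w = x := by simpa [SatChain] using h.2.1
    rcases t with _ | ⟨a, t⟩
    · obtain ⟨-, rfl⟩ := satChain_singleton_iff.1 h
      exact singleton
    · obtain ⟨-, hxa, ht⟩ := satChain_cons_cons_iff.1 h
      exact cons _ a t hxa ht (ih _ ht)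

theorem SatChain.le (h : SatChain x y c) : x ≤ y := by
  induction x, c, h using SatChain.induction with
  | singleton => exact le_rfl
  | cons x a t hxa _ ih => exact hxa.le.trans ih

theorem SatChain.le_of_mem (h : SatChain x y c) (hz : z ∈ c) : x ≤ z := by
  induction x, c, h using SatChain.induction with
  | singleton => simp_all
  | cons x a t hxa _ ih =>
    rcases List.mem_cons.1 hz with rfl | hz
    · exact le_rfl
    · exact hxa.le.trans (ih hz)

theorem SatChain.eq_singleton (h : SatChain x x c) : c = [x] := by
  obtain ⟨_ | ⟨a, t⟩, rfl⟩ := h.exists_eq_cons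
  · rfl
  · obtain ⟨-, hxa, ht⟩ := satChain_cons_cons_iff.1 h
    exact absurd ht.le hxa.lt.not_ge

theorem SatChain.eq_pair (hxy : x ⋖ y) (h : SatChain x y c) : c = [x, y] := by
  obtain ⟨_ | ⟨a, t⟩, rfl⟩ := h.exists_eq_cons
  · exact absurd (satChain_singleton_iff.1 h).2 hxy.ne
  · obtain ⟨-, hxa, ht⟩ := satChain_cons_cons_iff.1 h
    obtain rfl : a = y := ht.le.eq_of_not_lt fun hay => hxy.2 hxa.lt hay
    rw [ht.eq_singleton]

theorem SatChain.eq_cons_cons_of_mem (h : SatChain x y c) (hxa : x ⋖ a) (ha : a ∈ c) :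
    ∃ t, c = x :: a :: t := by
  obtain ⟨_ | ⟨b, t⟩, rfl⟩ := h.exists_eq_cons
  · simp [hxa.ne'] at ha
  · obtain ⟨-, hxb, hb⟩ := satChain_cons_cons_iff.1 h
    obtain rfl : b = a := by
      rcases List.mem_cons.1 ha with rfl | ha
      · exact absurd rfl hxa.ne'
      · exact (hb.le_of_mem ha).eq_of_not_lt fun hba => hxa.2 hxb.lt hba
    exact ⟨t, rfl⟩

theorem exists_satChain [Finite α] (h : x ≤ y) : ∃ c, SatChain x y c := by
  induction x using WellFoundedGT.induction with
  | _ x ih =>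
    rcases h.lt_or_eq with hlt | rfl
    · obtain ⟨a, hxa, hay⟩ := exists_covBy_le_of_lt hlt
      obtain ⟨c, hc⟩ := ih a hxa.lt hay
      exact ⟨x :: c, hc.cons hxa⟩
    · exact ⟨[x], satChain_singleton x⟩

end SatChain

section LabelSeq

variable {α Q : Type*} [PartialOrder α] {x y : α} {c c' : List α}

theorem not_labelSeq_prefix {lab : List α → α → α → Q}
    (hlab : ∀ r x a b, x ⋖ a → x ⋖ b → lab r x a = lab r x b → a = b) (r : List α)
    (hc : SatChain x y c) (hc' : SatChain x y c') (hne : c ≠ c') :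
    ¬ labelSeq lab r c <+: labelSeq lab r c' := by
  induction x, c, hc using SatChain.induction generalizing r c' with
  | singleton => exact absurd hc'.eq_singleton.symm hne
  | cons x a t hxa ht ih =>
    obtain ⟨_ | ⟨b, t'⟩, rfl⟩ := hc'.exists_eq_cons
    · obtain ⟨-, rfl⟩ := satChain_singleton_iff.1 hc'
      exact absurd ht.le hxa.lt.not_ge
    · obtain ⟨-, hxb, hb⟩ := satChain_cons_cons_iff.1 hc'
      simp only [labelSeq, List.cons_prefix_cons]
      rintro ⟨hl, hp⟩
      obtain rfl := hlab r x a b hxa hxb hl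
      exact ih (r ++ [a]) hb (fun h => hne (h ▸ rfl)) hp

end LabelSeq

namespace ChainAtomOrdering

variable {α : Type*} [PartialOrder α] (S : ChainAtomOrdering α) {u v w x a b : α}
  {r t c c' : List α}

theorem exists_first [Finite α] (u : α) (r : List α) {T : Set α} (hT : T.Nonempty)
    (hcov : ∀ a ∈ T, u ⋖ a) : ∃ a ∈ T, ∀ b ∈ T, b ≠ a → S.lt u r a b := by
  have : IsTrans α (S.lt u r) := ⟨S.trans u r⟩
  have : Std.Irrefl (S.lt u r) := ⟨S.irrefl u r⟩
  obtain ⟨a, ha, hmin⟩ := (Finite.wellFounded_of_trans_of_irrefl (S.lt u r)).has_min T hT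
  exact ⟨a, ha, fun b hb hba =>
    (S.total u r a b (hcov a ha) (hcov b hb) hba.symm).resolve_right (hmin b hb)⟩

theorem exists_isFirstAtom [Finite α] (h : u < v) (r : List α) :
    ∃ a, S.IsFirstAtom u v r a := by
  obtain ⟨a, hua, hav⟩ := exists_covBy_le_of_lt h
  obtain ⟨a, ha, hmin⟩ := S.exists_first u r (T := {a | u ⋖ a ∧ a ≤ v}) ⟨a, hua, hav⟩
    fun _ ha => ha.1
  exact ⟨a, ha.1, ha.2, fun b hub hbv => hmin b ⟨hub, hbv⟩⟩

theorem isFirstAtom_of_covBy (h : u ⋖ v) : S.IsFirstAtom u v r v :=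
  ⟨h, le_rfl, fun _ hub hbv hbv' => absurd (hbv.lt_of_ne hbv') (h.2 hub.lt)⟩

noncomputable def label (r : List α) (u a : α) : ℕ :=
  {b | u ⋖ b ∧ S.lt u r b a}.ncard + 1

theorem label_lt_label [Finite α] (ha : u ⋖ a) (hab : S.lt u r a b) :
    S.label r u a < S.label r u b := by
  have hsub : {c | u ⋖ c ∧ S.lt u r c a} ⊂ {c | u ⋖ c ∧ S.lt u r c b} :=
    ⟨fun c hc => ⟨hc.1, S.trans _ _ _ _ _ hc.2 hab⟩,
      fun hsub => S.irrefl u r a (hsub ⟨ha, hab⟩).2⟩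
  exact Nat.succ_lt_succ (Set.ncard_lt_ncard hsub)

theorem label_injective [Finite α] (ha : u ⋖ a) (hb : u ⋖ b)
    (h : S.label r u a = S.label r u b) : a = b := by
  by_contra hne
  rcases S.total u r a b ha hb hne with hab | hba
  · exact (S.label_lt_label ha hab).ne h
  · exact (S.label_lt_label hb hba).ne' h

theorem labelSeq_lex_of_lt [Finite α] (ha : u ⋖ a) (hab : S.lt u r a b) (s t : List α) :
    List.Lex (· < ·) (labelSeq S.label r (u :: a :: s)) (labelSeq S.label r (u :: b :: t)) :=
  List.Lex.rel (S.label_lt_label ha hab)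

theorem isFirstAtom_of_forall_lex [Finite α] (hc : SatChain u v (u :: a :: t))
    (hmin : ∀ c, SatChain u v c → c ≠ u :: a :: t →
      List.Lex (· < ·) (labelSeq S.label r (u :: a :: t)) (labelSeq S.label r c)) :
    S.IsFirstAtom u v r a := by
  obtain ⟨-, hua, ha⟩ := satChain_cons_cons_iff.1 hc
  refine ⟨hua, ha.le, fun b hub hbv hba => ?_⟩
  refine (S.total u r a b hua hub hba.symm).resolve_right fun hba' => ?_
  obtain ⟨c, hc⟩ := exists_satChain hbv
  obtain ⟨s, rfl⟩ := hc.exists_eq_cons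
  exact asymm (hmin _ (hc.cons hub) (by simp [hba])) (S.labelSeq_lex_of_lt hub hba' s t)

theorem topAscent_label_iff [Finite α] :
    TopAscent S.label r u a x ↔ a ⋖ x ∧ S.IsFirstAtom u x r a := by
  constructor
  · rintro ⟨hua, hax, hmin⟩
    exact ⟨hax, S.isFirstAtom_of_forall_lex (((satChain_singleton x).cons hax).cons hua) hmin⟩
  · rintro ⟨hax, ha⟩
    refine ⟨ha.1, hax, fun c hc hne => ?_⟩
    obtain ⟨_ | ⟨b, t⟩, rfl⟩ := hc.exists_eq_cons
    · exact absurd (satChain_singleton_iff.1 hc).2 (ha.1.lt.trans hax.lt).ne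
    obtain ⟨-, hub, hb⟩ := satChain_cons_cons_iff.1 hc
    by_cases hba : b = a
    · subst hba
      exact absurd (by rw [hb.eq_pair hax]) hne
    · exact S.labelSeq_lex_of_lt ha.1 (ha.2.2 b hub hb.le hba) [x] t

def IsGreedyChain (v : α) : List α → List α → Prop
  | r, x :: a :: t => S.IsFirstAtom x v r a ∧ IsGreedyChain v (r ++ [a]) (a :: t)
  | _, _ => True

theorem exists_isGreedyChain [Finite α] (h : u ≤ v) (r : List α) :
    ∃ c, SatChain u v c ∧ S.IsGreedyChain v r c := by
  induction u using WellFoundedGT.induction generalizing r with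
  | _ u ih =>
    rcases h.lt_or_eq with hlt | rfl
    · obtain ⟨a, ha⟩ := S.exists_isFirstAtom hlt r
      obtain ⟨c, hc, hg⟩ := ih a ha.1.lt ha.2.1 (r ++ [a])
      obtain ⟨t, rfl⟩ := hc.exists_eq_cons
      exact ⟨u :: a :: t, hc.cons ha.1, ha, hg⟩
    · exact ⟨[u], satChain_singleton u, trivial⟩

def AboveEarlier (u : α) (r : List α) (a z : α) : Prop :=
  ∃ a', u ⋖ a' ∧ S.lt u r a' a ∧ a' < z

variable {S}

theorem IsFirstAtom.eq {a' : α} (ha : S.IsFirstAtom u v r a)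
    (ha' : S.IsFirstAtom u v r a') : a = a' := by
  by_contra hne
  exact S.irrefl u r a (S.trans _ _ _ _ _ (ha.2.2 a' ha'.1 ha'.2.1 (Ne.symm hne))
    (ha'.2.2 a ha.1 ha.2.1 hne))

theorem IsFirstAtom.mono (ha : S.IsFirstAtom u v r a) (haw : a ≤ w)
    (hwv : w ≤ v) : S.IsFirstAtom u w r a :=
  ⟨ha.1, haw, fun b hub hbw => ha.2.2 b hub (hbw.trans hwv)⟩

theorem IsGreedyChain.eq (hg : S.IsGreedyChain v r c) (hg' : S.IsGreedyChain v r c')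
    (hc : SatChain u v c) (hc' : SatChain u v c') : c = c' := by
  induction u, c, hc using SatChain.induction generalizing r c' with
  | singleton => exact hc'.eq_singleton.symm
  | cons x a t hxa ht ih =>
    obtain ⟨_ | ⟨b, t'⟩, rfl⟩ := hc'.exists_eq_cons
    · obtain ⟨-, rfl⟩ := satChain_singleton_iff.1 hc'
      exact absurd ht.le hxa.lt.not_ge
    · obtain ⟨-, -, hb⟩ := satChain_cons_cons_iff.1 hc'
      obtain rfl := hg.1.eq hg'.1
      rw [ih hg.2 hg'.2 hb]

theorem IsGreedyChain.topAscending [Finite α] (hg : S.IsGreedyChain v r c)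
    (hc : SatChain u v c) : TopAscending S.label r c := by
  induction u, c, hc using SatChain.induction generalizing r with
  | singleton => trivial
  | cons x a t hxa ht ih =>
    rcases t with _ | ⟨b, t⟩
    · trivial
    · obtain ⟨-, hab, hb⟩ := satChain_cons_cons_iff.1 ht
      exact ⟨S.topAscent_label_iff.2 ⟨hab, hg.1.mono hab.le hb.le⟩, ih hg.2⟩

end ChainAtomOrdering

namespace IsGRAO

open ChainAtomOrdering

variable {α : Type*} [PartialOrder α] {S : ChainAtomOrdering α} {u v w x y z a b : α}
  {r c : List α}

theorem refl (S : ChainAtomOrdering α) (u : α) (r : List α) : IsGRAO S u u r :=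
  .step u u r (fun _ hua hau => absurd hua.lt hau.not_gt)
    (fun _ _ _ hua hau => absurd hua.lt hau.not_gt)
    (fun _ _ _ hua hau => absurd hua.lt hau.not_gt)

theorem of_covBy (G : IsGRAO S u w r) (hua : u ⋖ a) (haw : a ≤ w) :
    IsGRAO S a w (r ++ [a]) := by
  cases G with
  | base _ _ _ huw =>
    obtain rfl : a = w := haw.eq_of_not_lt (huw.2 hua.lt)
    exact .refl S a _
  | step _ _ _ ia _ _ => exact ia a hua haw

theorem of_satChain (G : IsGRAO S x w r) (hc : SatChain x y c) (hyw : y ≤ w) :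
    IsGRAO S y w (r ++ c.tail) := by
  induction x, c, hc using SatChain.induction generalizing r with
  | singleton => simpa using G
  | cons x a t hxa ht ih => simpa using ih (G.of_covBy hxa (ht.le.trans hyw))

theorem exists_aboveEarlier_lt (G : IsGRAO S u w r) (hvw : v ≤ w) (hua : u ⋖ a)
    (haz : a ⋖ z) (hzv : z ≤ v) (hz : S.AboveEarlier u r a z) (hax : a ⋖ x) (hxv : x ≤ v)
    (hxz : S.lt a (r ++ [a]) x z) :
    ∃ z', a ⋖ z' ∧ z' ≤ v ∧ S.AboveEarlier u r a z' ∧ S.lt a (r ++ [a]) z' z := by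
  obtain ⟨a0, hua0, ha0a, ha0z⟩ := hz
  have hxz' : x ≠ z := fun h => S.irrefl _ _ z (h ▸ hxz)
  have hzv' : z < v := hzv.lt_of_ne fun h => haz.2 hax.lt ((hxv.trans_eq h.symm).lt_of_ne hxz')
  have hxv' : x < v :=
    hxv.lt_of_ne fun h => hax.2 haz.lt ((hzv.trans_eq h.symm).lt_of_ne hxz'.symm)
  have haw : a ≤ w := haz.le.trans (hzv.trans hvw)
  cases G with
  | base _ _ _ huw => exact (huw.2 hua.lt (haz.lt.trans (hzv'.trans_le hvw))).elim
  | step _ _ _ ia ib _ =>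
  cases ia a hua haw with
  | base _ _ _ haw' => exact (haw'.2 haz.lt (hzv'.trans_le hvw)).elim
  | step _ _ _ _ _ ii =>
  obtain ⟨ck, z2, hack, -, hckz, hzz2, hz2v, hckz2⟩ :=
    ii x z v hax (hxv.trans hvw) haz (hzv.trans hvw) hxz hxv' hzv' hvw
  rcases ib a z z2 hua haw haz hzz2 (hz2v.trans hvw) with
    ⟨b, hb, a', hua', -, ha'a, ha'b⟩ | hnone
  · refine ⟨b, hb.1, hb.2.1.trans hz2v, ⟨a', hua', ha'a, ha'b⟩, ?_⟩
    rcases eq_or_ne ck b with rfl | hckb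
    · exact hckz
    · exact S.trans _ _ _ _ _ (hb.2.2 ck hack hckz2.le hckb) hckz
  · exact absurd ha0z (hnone z a0 haz hzz2.le hua0 (ha0z.le.trans (hzv.trans hvw)) ha0a)

theorem aboveEarlier_of_isFirstAtom [Finite α] (G : IsGRAO S u w r) (hvw : v ≤ w)
    (hua : u ⋖ a) (hub : u ⋖ b) (hbv : b ≤ v) (hba : S.lt u r b a)
    (hx : S.IsFirstAtom a v (r ++ [a]) x) : S.AboveEarlier u r a x := by
  have hav : a < v := hx.1.lt.trans_le hx.2.1
  have hbv' : b < v := hbv.lt_of_ne fun h => hub.2 hua.lt (h ▸ hav)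
  have hB : {z | a ⋖ z ∧ z ≤ v ∧ S.AboveEarlier u r a z}.Nonempty := by
    cases G with
    | base _ _ _ huw => exact (huw.2 hua.lt (hav.trans_le hvw)).elim
    | step _ _ _ _ _ ii =>
      obtain ⟨a', z, hua', -, ha'a, haz, hzv, ha'z⟩ :=
        ii b a v hub (hbv.trans hvw) hua (hav.le.trans hvw) hba hbv' hav hvw
      exact ⟨z, haz, hzv, a', hua', ha'a, ha'z⟩
  obtain ⟨z, ⟨haz, hzv, hz⟩, hmin⟩ := S.exists_first a (r ++ [a]) hB fun _ hz => hz.1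
  obtain rfl | hxz := eq_or_ne x z
  · exact hz
  obtain ⟨z', haz', hz'v, hz', hz'z⟩ :=
    G.exists_aboveEarlier_lt hvw hua haz hzv hz hx.1 hx.2.1 (hx.2.2 z haz hzv hxz.symm)
  have hz'z' : z' ≠ z := fun h => S.irrefl _ _ z (h ▸ hz'z)
  exact (S.irrefl _ _ z (S.trans _ _ _ _ _ (hmin z' ⟨haz', hz'v, hz'⟩ hz'z') hz'z)).elim

theorem isFirstAtom_of_isFirstAtom [Finite α] (G : IsGRAO S u w r) (hvw : v ≤ w)
    (ha : S.IsFirstAtom u x r a) (hx : S.IsFirstAtom a v (r ++ [a]) x) :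
    S.IsFirstAtom u v r a := by
  refine ⟨ha.1, hx.1.le.trans hx.2.1, fun b hub hbv hba => ?_⟩
  refine (S.total u r a b ha.1 hub hba.symm).resolve_right fun hba' => ?_
  obtain ⟨a', hua', ha'a, ha'x⟩ := G.aboveEarlier_of_isFirstAtom hvw ha.1 hub hbv hba' hx
  have ha'a' : a' ≠ a := fun h => S.irrefl _ _ a (h ▸ ha'a)
  exact S.irrefl _ _ a (S.trans _ _ _ _ _ (ha.2.2 a' hua' ha'x.le ha'a') ha'a)

theorem isGreedyChain_of_topAscending [Finite α] (G : IsGRAO S u w r) (hvw : v ≤ w)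
    (hc : SatChain u v c) (hasc : TopAscending S.label r c) : S.IsGreedyChain v r c := by
  induction u, c, hc using SatChain.induction generalizing r with
  | singleton => trivial
  | cons x a t hxa ht ih =>
    rcases t with _ | ⟨b, t⟩
    · obtain ⟨-, rfl⟩ := satChain_singleton_iff.1 ht
      exact ⟨S.isFirstAtom_of_covBy hxa, trivial⟩
    · have hg := ih (G.of_covBy hxa (ht.le.trans hvw)) hasc.2
      exact ⟨G.isFirstAtom_of_isFirstAtom hvw (S.topAscent_label_iff.1 hasc.1).2 hg.1, hg⟩

end IsGRAO

namespace ChainAtomOrdering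

variable {α : Type*} [PartialOrder α] [Finite α] (S : ChainAtomOrdering α)

theorem isCCLabeling_label [BoundedOrder α] (h : IsGRAO S ⊥ ⊤ [⊥]) :
    IsCCLabeling S.label := by
  intro u v r hr huv
  have G : IsGRAO S u ⊤ r := by
    obtain ⟨s, rfl⟩ := hr.exists_eq_cons
    simpa using h.of_satChain hr le_top
  obtain ⟨c, hc, hg⟩ := S.exists_isGreedyChain huv r
  refine ⟨⟨c, ⟨hc, hg.topAscending hc⟩, fun c' ⟨hc', hasc⟩ =>
    (G.isGreedyChain_of_topAscending le_top hc' hasc).eq hg hc' hc⟩, fun c c' hc hc' hne => ?_⟩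
  have hpre := not_labelSeq_prefix (lab := S.label) (fun _ _ _ _ => S.label_injective) r hc hc' hne
  exact ⟨fun heq => hpre (heq ▸ List.prefix_refl _), hpre⟩

theorem hasUE_label [OrderBot α] : HasUE S.label :=
  fun _ _ _ _ _ _ _ hua hav hub hbv ha hb =>
    S.label_injective hua hub ((ha _ hub hbv).antisymm (hb _ hua hav))

theorem selfConsistent_label [OrderBot α] : SelfConsistent S.label := by
  intro u v r _ c₀ hc₀ hmin a hua ha b hub hbv hba v' _ _ ca cb hca haca hcb hbcb
  obtain ⟨t, rfl⟩ := hc₀.eq_cons_cons_of_mem hua ha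
  obtain ⟨s, rfl⟩ := hca.eq_cons_cons_of_mem hua haca
  obtain ⟨s', rfl⟩ := hcb.eq_cons_cons_of_mem hub hbcb
  exact S.labelSeq_lex_of_lt hua ((S.isFirstAtom_of_forall_lex hc₀ hmin).2.2 b hub hbv hba) s s'

end ChainAtomOrdering

/-- From a GRAO `Γ` of a finite bounded poset, labeling the cover relation `u ⋖ a`
(with respect to a root `r` for `[u,⊤]`) by the position of `a` in the `Γ`-order on
the atoms of `[u,⊤]_r` (i.e. one more than the number of earlier atoms) yields a
(well-defined, by construction) CE-labeling that is a CC-labeling with the unique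
earliest (UE) property, and is self-consistent. -/
theorem stmt_16 {α : Type*} [PartialOrder α] [BoundedOrder α] [Fintype α]
    (Ga : ChainAtomOrdering α) (h : IsGRAO Ga ⊥ ⊤ [⊥]) :
    IsCCLabeling (fun r u a => Set.ncard {b | u ⋖ b ∧ Ga.lt u r b a} + 1) ∧
    HasUE (fun r u a => Set.ncard {b | u ⋖ b ∧ Ga.lt u r b a} + 1) ∧
    SelfConsistent (fun r u a => Set.ncard {b | u ⋖ b ∧ Ga.lt u r b a} + 1) :=
  ⟨Ga.isCCLabeling_label h, Ga.hasUE_label, Ga.selfConsistent_label⟩
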